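/- Termination of the Hydra game: the map r sending a finite rooted tree T to the sequence (a_i) ∈ ℕ^(ω,0), where a_i is the number of leaves of T at depth i, is a ranking function relative to the lexicographic well-founded order (comparing at the greatest index where the sequences differ); i.e., every tree T' obtained from T by one Hydra move satisfies r(T') < r(T). Consequently the Hydra game terminates: there is no infinite sequence of trees T_0, T_1, … where each T_{n+1} results from T_n by a Hydra move. -/

import Mathlib

/-- Finite rooted trees: a node together with the list of its subtrees. -/
inductive HTree : Type
  | node : List HTree → HTree

open HTree

mutual
  /-- `leavesAt T i` is the number of leaves of `T` at depth `i`. -/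
  def leavesAt : HTree → ℕ → ℕ
    | .node [], 0 => 1
    | .node [], _ + 1 => 0
    | .node (_ :: _), 0 => 0
    | .node (c :: cs), n + 1 => leavesAtList (c :: cs) n
  /-- The total number of leaves at depth `i` below the roots of a list of trees,
  where the roots are taken to have depth `0`. -/
  def leavesAtList : List HTree → ℕ → ℕ
    | [], _ => 0
    | c :: cs, n => leavesAt c n + leavesAtList cs n
end

/-- One Hydra step, seen from the grandparent of the chosen leaf: `GMove n t t'`
holds if `t'` results from `t` by choosing a leaf `l` at depth `≥ 2` in `t`,
adding `n` new leaves as children of the grandparent of `l`, and deleting `l`. -/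
inductive GMove (n : ℕ) : HTree → HTree → Prop
  /-- the current node is the grandparent of the chosen leaf -/
  | graft (cs₁ cs₂ ds₁ ds₂ : List HTree) :
      GMove n (node (cs₁ ++ node (ds₁ ++ node [] :: ds₂) :: cs₂))
              (node ((cs₁ ++ node (ds₁ ++ ds₂) :: cs₂) ++
                      List.replicate n (node [])))
  /-- the action happens in one of the subtrees -/
  | deeper (cs₁ cs₂ : List HTree) {c c' : HTree} :
      GMove n c c' → GMove n (node (cs₁ ++ c :: cs₂)) (node (cs₁ ++ c' :: cs₂))

/-- A move of the Hydra game on the whole tree (whose root is the root):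
either the chosen leaf has a grandparent (then `n` leaves are added there and
the leaf deleted), or the parent of the chosen leaf is the root (then the leaf
is simply deleted). -/
def Move (t t' : HTree) : Prop :=
  (∃ n : ℕ, GMove n t t') ∨
    ∃ cs₁ cs₂ : List HTree, t = node (cs₁ ++ node [] :: cs₂) ∧ t' = node (cs₁ ++ cs₂)

/-- The lexicographic-from-above order on sequences: `a < b` iff `a` and `b`
differ and `a_m < b_m` at the greatest index `m` where they differ. -/
def HydraLt (a b : ℕ → ℕ) : Prop :=
  ∃ m, a m < b m ∧ ∀ i, m < i → a i = b i

/-!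
A Hydra move deleting a leaf at depth `m` lowers the number of leaves at depth `m` by one and
changes nothing deeper: the new leaves, and the parent if it becomes a leaf, sit at depth `m - 1`.
Leaf profiles of finite trees are finitely supported, and on `ℕ →₀ ℕ` the order `HydraLt` is the
colexicographic order, which is well-founded.
-/

lemma hydraLt_iff_toColex_lt (a b : ℕ →₀ ℕ) : HydraLt a b ↔ toColex a < toColex b := by
  rw [Finsupp.Colex.lt_iff]
  exact exists_congr fun _ => and_comm

lemma HydraLt.add_left {a b : ℕ → ℕ} (h : HydraLt a b) (c : ℕ → ℕ) :
    HydraLt (fun i => c i + a i) (fun i => c i + b i) := by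
  obtain ⟨m, hlt, heq⟩ := h
  exact ⟨m, Nat.add_lt_add_left hlt (c m), fun i hi => congrArg (c i + ·) (heq i hi)⟩

lemma hydraLt_of_hydraLt_succ {a b : ℕ → ℕ}
    (h : HydraLt (fun i => a (i + 1)) (fun i => b (i + 1))) : HydraLt a b := by
  obtain ⟨m, hlt, heq⟩ := h
  refine ⟨m + 1, hlt, fun i hi => ?_⟩
  obtain ⟨j, rfl⟩ : ∃ j, i = j + 1 := ⟨i - 1, by omega⟩
  exact heq j (by omega)

lemma hydraLt_of_eq_add_single {a b : ℕ → ℕ} (m : ℕ)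
    (h : ∀ j, b (j + m) = a (j + m) + if j = 0 then 1 else 0) : HydraLt a b := by
  refine ⟨m, by simpa using (h 0).ge, fun i hi => ?_⟩
  have := h (i - m)
  rw [Nat.sub_add_cancel hi.le, if_neg (by omega)] at this
  omega

@[simp]
lemma leavesAt_node_succ (l : List HTree) (n : ℕ) :
    leavesAt (node l) (n + 1) = leavesAtList l n := by
  cases l <;> rfl

@[simp]
lemma leavesAt_leaf (n : ℕ) : leavesAt (node []) n = if n = 0 then 1 else 0 := by
  cases n <;> rfl

@[simp]
lemma leavesAtList_nil (n : ℕ) : leavesAtList [] n = 0 := rfl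

@[simp]
lemma leavesAtList_cons (t : HTree) (l : List HTree) (n : ℕ) :
    leavesAtList (t :: l) n = leavesAt t n + leavesAtList l n := rfl

@[simp]
lemma leavesAtList_append (l₁ l₂ : List HTree) (n : ℕ) :
    leavesAtList (l₁ ++ l₂) n = leavesAtList l₁ n + leavesAtList l₂ n := by
  induction l₁ with
  | nil => simp
  | cons t l ih => simp [ih, Nat.add_assoc]

@[simp]
lemma leavesAtList_replicate (k : ℕ) (t : HTree) (n : ℕ) :
    leavesAtList (List.replicate k t) n = k * leavesAt t n := by
  induction k with
  | zero => simp
  | succ k ih => simp [List.replicate_succ, ih, Nat.succ_mul, Nat.add_comm]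

lemma leavesAt_node_append_cons_succ (cs₁ cs₂ : List HTree) (c : HTree) (n : ℕ) :
    leavesAt (node (cs₁ ++ c :: cs₂)) (n + 1) = leavesAtList (cs₁ ++ cs₂) n + leavesAt c n := by
  simp only [leavesAt_node_succ, leavesAtList_append, leavesAtList_cons]
  omega

lemma GMove.hydraLt_leavesAt {n : ℕ} {t t' : HTree} (h : GMove n t t') :
    HydraLt (leavesAt t') (leavesAt t) := by
  induction h with
  | graft cs₁ cs₂ ds₁ ds₂ =>
    refine hydraLt_of_eq_add_single 2 fun j => ?_
    rw [leavesAt_node_append_cons_succ, leavesAt_node_append_cons_succ, leavesAt_leaf]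
    simp only [leavesAt_node_succ, leavesAtList_append, leavesAtList_cons, leavesAtList_nil,
      List.append_assoc, List.cons_append, leavesAtList_replicate, mul_zero]
    ring
  | deeper cs₁ cs₂ _ ih =>
    refine hydraLt_of_hydraLt_succ ?_
    simp only [leavesAt_node_append_cons_succ]
    exact ih.add_left _

lemma Move.hydraLt_leavesAt {t t' : HTree} (h : Move t t') :
    HydraLt (leavesAt t') (leavesAt t) := by
  rcases h with ⟨n, h⟩ | ⟨cs₁, cs₂, rfl, rfl⟩
  · exact h.hydraLt_leavesAt
  · refine hydraLt_of_eq_add_single 1 fun j => ?_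
    rw [leavesAt_node_append_cons_succ, leavesAt_node_succ, leavesAt_leaf]

mutual
  def HTree.height : HTree → ℕ
    | node cs => heightList cs + 1
  def HTree.heightList : List HTree → ℕ
    | [] => 0
    | c :: cs => max c.height (heightList cs)
end

mutual
  theorem leavesAt_eq_zero_of_height_le : ∀ (t : HTree) (i : ℕ), t.height ≤ i → leavesAt t i = 0
    | node l, 0, h => by simp [height] at h
    | node l, k + 1, h => by
      rw [leavesAt_node_succ]
      exact leavesAtList_eq_zero_of_heightList_le l k (by simp [height] at h; omega)
  theorem leavesAtList_eq_zero_of_heightList_le :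
      ∀ (l : List HTree) (i : ℕ), heightList l ≤ i → leavesAtList l i = 0
    | [], _, _ => rfl
    | c :: cs, i, h => by
      simp only [heightList, max_le_iff] at h
      simp [leavesAt_eq_zero_of_height_le c i h.1, leavesAtList_eq_zero_of_heightList_le cs i h.2]
end

noncomputable def leafProfile (t : HTree) : ℕ →₀ ℕ :=
  Finsupp.onFinset (Finset.range t.height) (leavesAt t) fun i hi =>
    Finset.mem_range.2 <| by_contra fun hle => hi <| leavesAt_eq_zero_of_height_le t i (by omega)

@[simp]
lemma coe_leafProfile (t : HTree) : ⇑(leafProfile t) = leavesAt t := rfl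

/-- Termination of the Hydra game: the map sending a tree `T` to
the (eventually zero) sequence `i ↦ (number of leaves of T at depth i)` is a
ranking function for the Hydra-move relation with respect to the well-founded
lexicographic-from-above order, i.e. every Hydra move strictly decreases it;
consequently there is no infinite sequence of Hydra moves. -/
theorem stmt_18 :
    (∀ T T' : HTree, Move T T' → HydraLt (leavesAt T') (leavesAt T)) ∧
    ¬ ∃ f : ℕ → HTree, ∀ k, Move (f k) (f (k + 1)) := by
  refine ⟨fun _ _ h => h.hydraLt_leavesAt, ?_⟩
  rintro ⟨f, hf⟩
  obtain ⟨k, hk⟩ :=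
    WellFounded.not_rel_apply_succ (r := (· < ·)) fun k => toColex (leafProfile (f k))
  refine hk ((hydraLt_iff_toColex_lt _ _).1 ?_)
  simpa using (hf k).hydraLt_leavesAt
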